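/- Let Γ be an all-different RCC5 network and let π be a path of length s ≥ 2 from a variable x to itself in Γ (i.e., a sequence of variables x = u₀, u₁, …, u_s = x with u_{t-1} ≠ u_t for each t). Then CT(π) contains all of PO, PP, PP⁻¹, and EQ, i.e., O₅ = {PO, PP, PP⁻¹, EQ} ⊆ CT(π). -/
import Mathlib


/-- A *region* is a nonempty regular closed subset of the Euclidean plane `ℝ × ℝ`. -/
def Region : Type :=
  {x : Set (ℝ × ℝ) // x.Nonempty ∧ x = closure (interior x)}

namespace Region

/-- Part-of: `x P y` iff `x ⊆ y`. -/
def P (x y : Region) : Prop := x.1 ⊆ y.1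

/-- Overlap: `x O y` iff some region is a common part of `x` and `y`. -/
def O (x y : Region) : Prop := ∃ z : Region, z.1 ⊆ x.1 ∧ z.1 ⊆ y.1

/-- Connection: `x C y` iff `x ∩ y ≠ ∅`. -/
def C (x y : Region) : Prop := (x.1 ∩ y.1).Nonempty

end Region

/-- The five basic RCC5 relations. -/
inductive RCC5Basic : Type
  | DR | PO | PP | PPi | EQ
deriving DecidableEq

namespace RCC5Basic

/-- Interpretation of the basic RCC5 relations on regions. -/
def interp : RCC5Basic → Region → Region → Prop
  | DR, x, y => ¬ Region.O x y
  | PO, x, y => Region.O x y ∧ ¬ x.1 ⊆ y.1 ∧ ¬ y.1 ⊆ x.1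
  | PP, x, y => x.1 ⊆ y.1 ∧ x ≠ y
  | PPi, x, y => y.1 ⊆ x.1 ∧ x ≠ y
  | EQ, x, y => x = y

/-- Converse of a basic RCC5 relation. -/
def conv : RCC5Basic → RCC5Basic
  | DR => DR | PO => PO | PP => PPi | PPi => PP | EQ => EQ

end RCC5Basic

/-- An RCC5 relation is a union of basic relations, identified with a subset of `B₅`. -/
abbrev RCC5Rel : Type := Set RCC5Basic

namespace RCC5Rel

/-- A pair of regions is an instance of an RCC5 relation iff it is an instance of one of
its basic relations. -/
def interp (R : RCC5Rel) (x y : Region) : Prop := ∃ b ∈ R, RCC5Basic.interp b x y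

/-- Converse of an RCC5 relation. -/
def conv (R : RCC5Rel) : RCC5Rel := {b | RCC5Basic.conv b ∈ R}

/-- Weak composition: `γ ∈ R ⋄ S` iff `γ` intersects the relational composition `R ∘ S`. -/
def comp (R S : RCC5Rel) : RCC5Rel :=
  {γ | ∃ x z : Region, RCC5Basic.interp γ x z ∧
        ∃ y : Region, RCC5Rel.interp R x y ∧ RCC5Rel.interp S y z}

lemma conv_univ : RCC5Rel.conv Set.univ = Set.univ := by
  ext b; simp [RCC5Rel.conv]

end RCC5Rel

/-- A distributive subalgebra of RCC5: contains all basic relations, is closed under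
converse, weak composition and (nonempty) intersection, and weak composition distributes
over nonempty intersections. -/
def IsDistributiveSubalgebra (𝒮 : Set RCC5Rel) : Prop :=
  (∀ b : RCC5Basic, ({b} : RCC5Rel) ∈ 𝒮) ∧
  (∀ R ∈ 𝒮, RCC5Rel.conv R ∈ 𝒮) ∧
  (∀ R ∈ 𝒮, ∀ S ∈ 𝒮, RCC5Rel.comp R S ∈ 𝒮) ∧
  (∀ R ∈ 𝒮, ∀ S ∈ 𝒮, (R ∩ S).Nonempty → R ∩ S ∈ 𝒮) ∧
  (∀ R ∈ 𝒮, ∀ T₁ ∈ 𝒮, ∀ T₂ ∈ 𝒮, (T₁ ∩ T₂).Nonempty →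
    RCC5Rel.comp R (T₁ ∩ T₂) = RCC5Rel.comp R T₁ ∩ RCC5Rel.comp R T₂ ∧
    RCC5Rel.comp (T₁ ∩ T₂) R = RCC5Rel.comp T₁ R ∩ RCC5Rel.comp T₂ R)

/-- An RCC5 (constraint) network on `n` variables. -/
structure RCC5Network (n : ℕ) where
  rel : Fin n → Fin n → RCC5Rel
  conv_rel : ∀ i j, rel j i = RCC5Rel.conv (rel i j)
  diag : ∀ i, rel i i = {RCC5Basic.EQ}

namespace RCC5Network

variable {n : ℕ}

/-- A solution of a network assigns regions to the variables satisfying all constraints. -/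
def IsSolution (Γ : RCC5Network n) (a : Fin n → Region) : Prop :=
  ∀ i j, RCC5Rel.interp (Γ.rel i j) (a i) (a j)

/-- A network is consistent if it has a solution. -/
def Consistent (Γ : RCC5Network n) : Prop := ∃ a, Γ.IsSolution a

/-- `Γ` entails the constraint `(v_i S v_j)`. -/
def Entails (Γ : RCC5Network n) (i j : Fin n) (S : RCC5Rel) : Prop :=
  ∀ a, Γ.IsSolution a → RCC5Rel.interp S (a i) (a j)

/-- All-different: consistent and no two distinct variables are forced to be equal. -/
def AllDifferent (Γ : RCC5Network n) : Prop :=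
  Γ.Consistent ∧ ∀ i j, i ≠ j → ¬ Γ.Entails i j {RCC5Basic.EQ}

/-- Path-consistency. -/
def PathConsistent (Γ : RCC5Network n) : Prop :=
  ∀ i j k, (Γ.rel i j).Nonempty ∧ Γ.rel i j ⊆ RCC5Rel.comp (Γ.rel i k) (Γ.rel k j)

/-- The network is over the subclass `𝒮`. -/
def Over (Γ : RCC5Network n) (𝒮 : Set RCC5Rel) : Prop := ∀ i j, Γ.rel i j ∈ 𝒮

/-- `Γ'` refines `Γ`. -/
def Refines (Γ' Γ : RCC5Network n) : Prop := ∀ i j, Γ'.rel i j ⊆ Γ.rel i j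

/-- `Γp` is the a-closure of `Γ`: the pointwise-largest path-consistent refinement. -/
def IsAClosure (Γp Γ : RCC5Network n) : Prop :=
  Γp.PathConsistent ∧ Γp.Refines Γ ∧
    ∀ Γ' : RCC5Network n, Γ'.PathConsistent → Γ'.Refines Γ → Γ'.Refines Γp

/-- A scenario of (the restriction of) `Γ` on the variable set `V`. -/
def IsScenarioOn (Γ : RCC5Network n) (V : Set (Fin n)) (s : Fin n → Fin n → RCC5Basic) : Prop :=
  (∀ i ∈ V, ∀ j ∈ V, s i j ∈ Γ.rel i j) ∧
  (∀ i ∈ V, ∀ j ∈ V, s j i = RCC5Basic.conv (s i j)) ∧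
  (∀ i ∈ V, s i i = RCC5Basic.EQ)

/-- Consistency of a scenario on a variable set `V`. -/
def ScenarioConsistentOn (V : Set (Fin n)) (s : Fin n → Fin n → RCC5Basic) : Prop :=
  ∃ a : Fin n → Region, ∀ i ∈ V, ∀ j ∈ V, RCC5Basic.interp (s i j) (a i) (a j)

/-- Weakly globally consistent: every consistent scenario of a restriction of `Γ` extends
to a consistent scenario of `Γ`. -/
def WeaklyGloballyConsistent (Γ : RCC5Network n) : Prop :=
  ∀ V : Set (Fin n), V.Nonempty → ∀ s, Γ.IsScenarioOn V s → ScenarioConsistentOn V s →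
    ∃ s', Γ.IsScenarioOn Set.univ s' ∧ ScenarioConsistentOn Set.univ s' ∧
      ∀ i ∈ V, ∀ j ∈ V, s' i j = s i j

/-- Minimality: every basic relation in every constraint is feasible. -/
def Minimal (Γ : RCC5Network n) : Prop :=
  ∀ i j, i ≠ j → ∀ α ∈ Γ.rel i j,
    ∃ a, Γ.IsSolution a ∧ RCC5Basic.interp α (a i) (a j)

/-- Weak composition `CT` along a path `u :: l` of variables. -/
def pathCT (Γ : RCC5Network n) : Fin n → List (Fin n) → RCC5Rel
  | _, [] => Set.univ
  | u, [v] => Γ.rel u v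
  | u, v :: w :: rest => RCC5Rel.comp (Γ.rel u v) (pathCT Γ v (w :: rest))

/-- The network obtained from `Γ` by replacing the constraints between `v_i` and `v_j`
(`i ≠ j`) by the universal relation. -/
def removeEdge (Γ : RCC5Network n) (i j : Fin n) : RCC5Network n where
  rel a b := if i ≠ j ∧ ((a = i ∧ b = j) ∨ (a = j ∧ b = i)) then Set.univ else Γ.rel a b
  conv_rel a b := by
    by_cases h : i ≠ j ∧ ((a = i ∧ b = j) ∨ (a = j ∧ b = i))
    · have h' : i ≠ j ∧ ((b = i ∧ a = j) ∨ (b = j ∧ a = i)) := by tauto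
      simp only [if_pos h, if_pos h', RCC5Rel.conv_univ]
    · have h' : ¬(i ≠ j ∧ ((b = i ∧ a = j) ∨ (b = j ∧ a = i))) := by tauto
      simp only [if_neg h, if_neg h']
      exact Γ.conv_rel a b
  diag a := by
    have h : ¬(i ≠ j ∧ ((a = i ∧ a = j) ∨ (a = j ∧ a = i))) := by
      rintro ⟨hij, ⟨h1, h2⟩ | ⟨h1, h2⟩⟩
      · exact hij (h1.symm.trans h2)
      · exact hij (h2.symm.trans h1)
    simp only [if_neg h]
    exact Γ.diag a

/-- A constraint `(v_i R_ij v_j)` is redundant in `Γ` if the network obtained by replacing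
it (and its converse) with the universal relation entails it. -/
def Redundant (Γ : RCC5Network n) (i j : Fin n) : Prop :=
  (Γ.removeEdge i j).Entails i j (Γ.rel i j)

open Classical in
/-- The core of `Γ`: every redundant constraint (and its converse) is replaced by the
universal relation. -/
noncomputable def core (Γ : RCC5Network n) : RCC5Network n where
  rel a b := if a ≠ b ∧ (Γ.Redundant a b ∨ Γ.Redundant b a) then Set.univ else Γ.rel a b
  conv_rel a b := by
    by_cases h : a ≠ b ∧ (Γ.Redundant a b ∨ Γ.Redundant b a)
    · have h' : b ≠ a ∧ (Γ.Redundant b a ∨ Γ.Redundant a b) := ⟨h.1.symm, h.2.symm⟩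
      simp only [if_pos h, if_pos h', RCC5Rel.conv_univ]
    · have h' : ¬(b ≠ a ∧ (Γ.Redundant b a ∨ Γ.Redundant a b)) := by
        intro hc; exact h ⟨hc.1.symm, hc.2.symm⟩
      simp only [if_neg h, if_neg h']
      exact Γ.conv_rel a b
  diag a := by
    have h : ¬(a ≠ a ∧ (Γ.Redundant a a ∨ Γ.Redundant a a)) := fun hc => hc.1 rfl
    simp only [if_neg h]
    exact Γ.diag a

end RCC5Network

/-- A path from `i` to `j` in a network on `n` variables: a nonempty list `l` of successive
vertices (so the path is `i :: l`), with consecutive vertices distinct, ending at `j`. -/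
def IsPathFrom {n : ℕ} (i j : Fin n) (l : List (Fin n)) : Prop :=
  l ≠ [] ∧ l.getLast? = some j ∧ List.Chain (· ≠ ·) i l

/-- The path `u :: l` never traverses the edge `{i, j}` (in either direction). -/
def AvoidsEdge {n : ℕ} (i j : Fin n) (u : Fin n) (l : List (Fin n)) : Prop :=
  List.Chain (fun a b => ¬(a = i ∧ b = j) ∧ ¬(a = j ∧ b = i)) u l


namespace O5Aux

open RCC5Basic

lemma region_eq {x y : Region} (h1 : x.1 ⊆ y.1) (h2 : y.1 ⊆ x.1) : x = y :=
  Subtype.ext (subset_antisymm h1 h2)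

lemma O_of_sub {x y : Region} (h : x.1 ⊆ y.1) : Region.O x y := ⟨x, subset_rfl, h⟩

lemma O_of_sub' {x y : Region} (h : y.1 ⊆ x.1) : Region.O x y := ⟨y, h, subset_rfl⟩

lemma O_symm {x y : Region} (h : Region.O x y) : Region.O y x := by
  obtain ⟨z, h1, h2⟩ := h; exact ⟨z, h2, h1⟩

lemma basic_total (x y : Region) : ∃ b : RCC5Basic, RCC5Basic.interp b x y := by
  by_cases hxy : x = y
  · exact ⟨.EQ, hxy⟩
  by_cases h1 : x.1 ⊆ y.1
  · exact ⟨.PP, h1, hxy⟩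
  by_cases h2 : y.1 ⊆ x.1
  · exact ⟨.PPi, h2, hxy⟩
  by_cases hO : Region.O x y
  · exact ⟨.PO, hO, h1, h2⟩
  · exact ⟨.DR, hO⟩

lemma basic_unique {b c : RCC5Basic} {x y : Region}
    (hb : RCC5Basic.interp b x y) (hc : RCC5Basic.interp c x y) : b = c := by
  cases b <;> cases c <;> try rfl
  case DR.PO => exact absurd hc.1 hb
  case DR.PP => exact absurd (O_of_sub hc.1) hb
  case DR.PPi => exact absurd (O_of_sub' hc.1) hb
  case DR.EQ => exact absurd (O_of_sub (hc ▸ subset_rfl)) hb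
  case PO.DR => exact absurd hb.1 hc
  case PO.PP => exact absurd hc.1 hb.2.1
  case PO.PPi => exact absurd hc.1 hb.2.2
  case PO.EQ => exact absurd (hc ▸ subset_rfl) hb.2.1
  case PP.DR => exact absurd (O_of_sub hb.1) hc
  case PP.PO => exact absurd hb.1 hc.2.1
  case PP.PPi => exact absurd (region_eq hb.1 hc.1) hb.2
  case PP.EQ => exact absurd hc hb.2
  case PPi.DR => exact absurd (O_of_sub' hb.1) hc
  case PPi.PO => exact absurd hb.1 hc.2.2
  case PPi.PP => exact absurd (region_eq hc.1 hb.1) hb.2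
  case PPi.EQ => exact absurd hc hb.2
  case EQ.DR => exact absurd (O_of_sub (hb ▸ subset_rfl)) hc
  case EQ.PO => exact absurd (hb ▸ subset_rfl) hc.2.1
  case EQ.PP => exact absurd hb hc.2
  case EQ.PPi => exact absurd hb hc.2

lemma basic_conv {b : RCC5Basic} {x y : Region} (hb : RCC5Basic.interp b x y) :
    RCC5Basic.interp (RCC5Basic.conv b) y x := by
  cases b with
  | DR => exact fun h => hb (O_symm h)
  | PO => exact ⟨O_symm hb.1, hb.2.2, hb.2.1⟩
  | PP => exact ⟨hb.1, hb.2.symm⟩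
  | PPi => exact ⟨hb.1, hb.2.symm⟩
  | EQ => exact hb.symm

/-- Closed ball of radius `r > 0` centered at `(t, 0)`, as a region. -/
noncomputable def B (t r : ℝ) (hr : 0 < r) : Region :=
  ⟨Metric.closedBall ((t, 0) : ℝ × ℝ) r, ⟨(t, 0), Metric.mem_closedBall_self hr.le⟩, by
    rw [interior_closedBall _ hr.ne', closure_ball _ hr.ne']⟩

lemma dist_pt (a b : ℝ) : dist ((a,0):ℝ×ℝ) ((b,0):ℝ×ℝ) = |a - b| := by
  rw [Prod.dist_eq]; simp [Real.dist_eq]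

lemma mem_B {a t r : ℝ} (hr : 0 < r) (h1 : t - r ≤ a) (h2 : a ≤ t + r) :
    ((a,0) : ℝ×ℝ) ∈ (B t r hr).1 := by
  show dist _ _ ≤ r
  rw [dist_pt, abs_sub_le_iff]
  constructor <;> linarith

lemma notmem_B {a t r : ℝ} (hr : 0 < r) (h : t + r < a ∨ a < t - r) :
    ((a,0) : ℝ×ℝ) ∉ (B t r hr).1 := by
  show ¬ dist _ _ ≤ r
  rw [dist_pt, not_le, lt_abs]
  rcases h with h | h
  · left; linarith
  · right; linarith

lemma B_sub {t₁ r₁ t₂ r₂ : ℝ} (h₁ : 0 < r₁) (h₂ : 0 < r₂)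
    (ha : t₂ - r₂ ≤ t₁ - r₁) (hb : t₁ + r₁ ≤ t₂ + r₂) :
    (B t₁ r₁ h₁).1 ⊆ (B t₂ r₂ h₂).1 := by
  apply Metric.closedBall_subset_closedBall'
  rw [dist_pt]
  have : |t₁ - t₂| ≤ r₂ - r₁ := by rw [abs_sub_le_iff]; constructor <;> linarith
  linarith

lemma B_nsub {t₁ r₁ t₂ r₂ : ℝ} (h₁ : 0 < r₁) (h₂ : 0 < r₂) (a : ℝ)
    (ha1 : t₁ - r₁ ≤ a) (ha2 : a ≤ t₁ + r₁) (hb : t₂ + r₂ < a ∨ a < t₂ - r₂) :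
    ¬ (B t₁ r₁ h₁).1 ⊆ (B t₂ r₂ h₂).1 := fun h =>
  notmem_B h₂ hb (h (mem_B h₁ ha1 ha2))

lemma B_ne {t₁ r₁ t₂ r₂ : ℝ} (h₁ : 0 < r₁) (h₂ : 0 < r₂) (a : ℝ)
    (ha1 : t₁ - r₁ ≤ a) (ha2 : a ≤ t₁ + r₁) (hb : t₂ + r₂ < a ∨ a < t₂ - r₂) :
    B t₁ r₁ h₁ ≠ B t₂ r₂ h₂ := by
  intro h
  exact notmem_B h₂ hb (h ▸ mem_B h₁ ha1 ha2)

lemma B_O {t₁ r₁ t₂ r₂ : ℝ} (h₁ : 0 < r₁) (h₂ : 0 < r₂) (m ε : ℝ) (hε : 0 < ε)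
    (a1 : t₁ - r₁ ≤ m - ε) (a2 : m + ε ≤ t₁ + r₁)
    (b1 : t₂ - r₂ ≤ m - ε) (b2 : m + ε ≤ t₂ + r₂) :
    Region.O (B t₁ r₁ h₁) (B t₂ r₂ h₂) :=
  ⟨B m ε hε, B_sub hε h₁ a1 a2, B_sub hε h₂ b1 b2⟩

lemma B_nO {t₁ r₁ t₂ r₂ : ℝ} (h₁ : 0 < r₁) (h₂ : 0 < r₂)
    (h : r₁ + r₂ < |t₁ - t₂|) : ¬ Region.O (B t₁ r₁ h₁) (B t₂ r₂ h₂) := by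
  rintro ⟨z, hz1, hz2⟩
  obtain ⟨p, hp⟩ := z.2.1
  have e1 : dist p ((t₁,0):ℝ×ℝ) ≤ r₁ := hz1 hp
  have e2 : dist p ((t₂,0):ℝ×ℝ) ≤ r₂ := hz2 hp
  have := dist_triangle ((t₁,0):ℝ×ℝ) p ((t₂,0):ℝ×ℝ)
  rw [dist_pt] at this
  rw [dist_comm] at e1
  linarith

lemma B_nO' {t₁ r₁ t₂ r₂ : ℝ} (h₁ : 0 < r₁) (h₂ : 0 < r₂)
    (h : r₁ + r₂ < t₂ - t₁ ∨ r₁ + r₂ < t₁ - t₂) :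
    ¬ Region.O (B t₁ r₁ h₁) (B t₂ r₂ h₂) := by
  apply B_nO
  rcases h with h | h
  · calc r₁ + r₂ < t₂ - t₁ := h
      _ ≤ |t₂ - t₁| := le_abs_self _
      _ = |t₁ - t₂| := abs_sub_comm _ _
  · exact lt_of_lt_of_le h (le_abs_self _)

lemma p1 : (0:ℝ) < 1 := one_pos
lemma p2 : (0:ℝ) < 2 := by norm_num
lemma p4 : (0:ℝ) < 4 := by norm_num
lemma p20 : (0:ℝ) < 20 := by norm_num

lemma exists_triple (b : RCC5Basic) (hb : b ≠ RCC5Basic.EQ) (γ : RCC5Basic)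
    (hγ : γ ≠ RCC5Basic.DR) :
    ∃ X Y Z : Region, RCC5Basic.interp b X Y ∧ RCC5Basic.interp (RCC5Basic.conv b) Y Z ∧
      RCC5Basic.interp γ X Z := by
  cases b with
  | EQ => exact absurd rfl hb
  | DR =>
    cases γ with
    | DR => exact absurd rfl hγ
    | EQ =>
      exact ⟨B 0 1 p1, B 100 1 p1, B 0 1 p1,
        B_nO' p1 p1 (by norm_num), B_nO' p1 p1 (by norm_num), rfl⟩
    | PP =>
      exact ⟨B 0 1 p1, B 100 1 p1, B 0 2 p2,
        B_nO' p1 p1 (by norm_num), B_nO' p1 p2 (by norm_num),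
        B_sub p1 p2 (by norm_num) (by norm_num),
        (B_ne p2 p1 2 (by norm_num) (by norm_num) (by norm_num)).symm⟩
    | PPi =>
      exact ⟨B 0 2 p2, B 100 1 p1, B 0 1 p1,
        B_nO' p2 p1 (by norm_num), B_nO' p1 p1 (by norm_num),
        B_sub p1 p2 (by norm_num) (by norm_num),
        B_ne p2 p1 2 (by norm_num) (by norm_num) (by norm_num)⟩
    | PO =>
      exact ⟨B 0 4 p4, B 100 1 p1, B 2 4 p4,
        B_nO' p4 p1 (by norm_num), B_nO' p1 p4 (by norm_num),
        B_O p4 p4 1 1 p1 (by norm_num) (by norm_num) (by norm_num) (by norm_num),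
        B_nsub p4 p4 (-4) (by norm_num) (by norm_num) (by norm_num),
        B_nsub p4 p4 6 (by norm_num) (by norm_num) (by norm_num)⟩
  | PO =>
    cases γ with
    | DR => exact absurd rfl hγ
    | EQ =>
      exact ⟨B 0 4 p4, B 2 4 p4, B 0 4 p4,
        ⟨B_O p4 p4 1 1 p1 (by norm_num) (by norm_num) (by norm_num) (by norm_num),
         B_nsub p4 p4 (-4) (by norm_num) (by norm_num) (by norm_num),
         B_nsub p4 p4 6 (by norm_num) (by norm_num) (by norm_num)⟩,
        ⟨B_O p4 p4 1 1 p1 (by norm_num) (by norm_num) (by norm_num) (by norm_num),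
         B_nsub p4 p4 6 (by norm_num) (by norm_num) (by norm_num),
         B_nsub p4 p4 (-4) (by norm_num) (by norm_num) (by norm_num)⟩, rfl⟩
    | PP =>
      exact ⟨B 0 2 p2, B 4 4 p4, B 0 4 p4,
        ⟨B_O p2 p4 1 1 p1 (by norm_num) (by norm_num) (by norm_num) (by norm_num),
         B_nsub p2 p4 (-2) (by norm_num) (by norm_num) (by norm_num),
         B_nsub p4 p2 8 (by norm_num) (by norm_num) (by norm_num)⟩,
        ⟨B_O p4 p4 1 1 p1 (by norm_num) (by norm_num) (by norm_num) (by norm_num),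
         B_nsub p4 p4 8 (by norm_num) (by norm_num) (by norm_num),
         B_nsub p4 p4 (-4) (by norm_num) (by norm_num) (by norm_num)⟩,
        B_sub p2 p4 (by norm_num) (by norm_num),
        (B_ne p4 p2 4 (by norm_num) (by norm_num) (by norm_num)).symm⟩
    | PPi =>
      exact ⟨B 0 4 p4, B 4 4 p4, B 0 2 p2,
        ⟨B_O p4 p4 1 1 p1 (by norm_num) (by norm_num) (by norm_num) (by norm_num),
         B_nsub p4 p4 (-4) (by norm_num) (by norm_num) (by norm_num),
         B_nsub p4 p4 8 (by norm_num) (by norm_num) (by norm_num)⟩,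
        ⟨B_O p4 p2 1 1 p1 (by norm_num) (by norm_num) (by norm_num) (by norm_num),
         B_nsub p4 p2 8 (by norm_num) (by norm_num) (by norm_num),
         B_nsub p2 p4 (-2) (by norm_num) (by norm_num) (by norm_num)⟩,
        B_sub p2 p4 (by norm_num) (by norm_num),
        B_ne p4 p2 4 (by norm_num) (by norm_num) (by norm_num)⟩
    | PO =>
      exact ⟨B 0 4 p4, B 1 4 p4, B 2 4 p4,
        ⟨B_O p4 p4 1 1 p1 (by norm_num) (by norm_num) (by norm_num) (by norm_num),
         B_nsub p4 p4 (-4) (by norm_num) (by norm_num) (by norm_num),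
         B_nsub p4 p4 5 (by norm_num) (by norm_num) (by norm_num)⟩,
        ⟨B_O p4 p4 1 1 p1 (by norm_num) (by norm_num) (by norm_num) (by norm_num),
         B_nsub p4 p4 (-3) (by norm_num) (by norm_num) (by norm_num),
         B_nsub p4 p4 6 (by norm_num) (by norm_num) (by norm_num)⟩,
        B_O p4 p4 1 1 p1 (by norm_num) (by norm_num) (by norm_num) (by norm_num),
        B_nsub p4 p4 (-4) (by norm_num) (by norm_num) (by norm_num),
        B_nsub p4 p4 6 (by norm_num) (by norm_num) (by norm_num)⟩
  | PP =>
    cases γ with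
    | DR => exact absurd rfl hγ
    | EQ =>
      exact ⟨B 0 1 p1, B 0 2 p2, B 0 1 p1,
        ⟨B_sub p1 p2 (by norm_num) (by norm_num),
         (B_ne p2 p1 2 (by norm_num) (by norm_num) (by norm_num)).symm⟩,
        ⟨B_sub p1 p2 (by norm_num) (by norm_num),
         B_ne p2 p1 2 (by norm_num) (by norm_num) (by norm_num)⟩, rfl⟩
    | PP =>
      exact ⟨B 0 1 p1, B 0 4 p4, B 0 2 p2,
        ⟨B_sub p1 p4 (by norm_num) (by norm_num),
         (B_ne p4 p1 4 (by norm_num) (by norm_num) (by norm_num)).symm⟩,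
        ⟨B_sub p2 p4 (by norm_num) (by norm_num),
         B_ne p4 p2 4 (by norm_num) (by norm_num) (by norm_num)⟩,
        B_sub p1 p2 (by norm_num) (by norm_num),
        (B_ne p2 p1 2 (by norm_num) (by norm_num) (by norm_num)).symm⟩
    | PPi =>
      exact ⟨B 0 2 p2, B 0 4 p4, B 0 1 p1,
        ⟨B_sub p2 p4 (by norm_num) (by norm_num),
         (B_ne p4 p2 4 (by norm_num) (by norm_num) (by norm_num)).symm⟩,
        ⟨B_sub p1 p4 (by norm_num) (by norm_num),
         B_ne p4 p1 4 (by norm_num) (by norm_num) (by norm_num)⟩,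
        B_sub p1 p2 (by norm_num) (by norm_num),
        B_ne p2 p1 2 (by norm_num) (by norm_num) (by norm_num)⟩
    | PO =>
      exact ⟨B 0 4 p4, B 0 20 p20, B 2 4 p4,
        ⟨B_sub p4 p20 (by norm_num) (by norm_num),
         (B_ne p20 p4 20 (by norm_num) (by norm_num) (by norm_num)).symm⟩,
        ⟨B_sub p4 p20 (by norm_num) (by norm_num),
         B_ne p20 p4 20 (by norm_num) (by norm_num) (by norm_num)⟩,
        B_O p4 p4 1 1 p1 (by norm_num) (by norm_num) (by norm_num) (by norm_num),
        B_nsub p4 p4 (-4) (by norm_num) (by norm_num) (by norm_num),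
        B_nsub p4 p4 6 (by norm_num) (by norm_num) (by norm_num)⟩
  | PPi =>
    cases γ with
    | DR => exact absurd rfl hγ
    | EQ =>
      exact ⟨B 0 2 p2, B 0 1 p1, B 0 2 p2,
        ⟨B_sub p1 p2 (by norm_num) (by norm_num),
         B_ne p2 p1 2 (by norm_num) (by norm_num) (by norm_num)⟩,
        ⟨B_sub p1 p2 (by norm_num) (by norm_num),
         (B_ne p2 p1 2 (by norm_num) (by norm_num) (by norm_num)).symm⟩, rfl⟩
    | PP =>
      exact ⟨B 0 2 p2, B 0 1 p1, B 0 4 p4,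
        ⟨B_sub p1 p2 (by norm_num) (by norm_num),
         B_ne p2 p1 2 (by norm_num) (by norm_num) (by norm_num)⟩,
        ⟨B_sub p1 p4 (by norm_num) (by norm_num),
         (B_ne p4 p1 4 (by norm_num) (by norm_num) (by norm_num)).symm⟩,
        B_sub p2 p4 (by norm_num) (by norm_num),
        (B_ne p4 p2 4 (by norm_num) (by norm_num) (by norm_num)).symm⟩
    | PPi =>
      exact ⟨B 0 4 p4, B 0 1 p1, B 0 2 p2,
        ⟨B_sub p1 p4 (by norm_num) (by norm_num),
         B_ne p4 p1 4 (by norm_num) (by norm_num) (by norm_num)⟩,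
        ⟨B_sub p1 p2 (by norm_num) (by norm_num),
         (B_ne p2 p1 2 (by norm_num) (by norm_num) (by norm_num)).symm⟩,
        B_sub p2 p4 (by norm_num) (by norm_num),
        B_ne p4 p2 4 (by norm_num) (by norm_num) (by norm_num)⟩
    | PO =>
      exact ⟨B 0 4 p4, B 1 1 p1, B 2 4 p4,
        ⟨B_sub p1 p4 (by norm_num) (by norm_num),
         B_ne p4 p1 4 (by norm_num) (by norm_num) (by norm_num)⟩,
        ⟨B_sub p1 p4 (by norm_num) (by norm_num),
         (B_ne p4 p1 6 (by norm_num) (by norm_num) (by norm_num)).symm⟩,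
        B_O p4 p4 1 1 p1 (by norm_num) (by norm_num) (by norm_num) (by norm_num),
        B_nsub p4 p4 (-4) (by norm_num) (by norm_num) (by norm_num),
        B_nsub p4 p4 6 (by norm_num) (by norm_num) (by norm_num)⟩

lemma mem_pathCT {n : ℕ} (Γ : RCC5Network n) (a : Fin n → Region) (ha : Γ.IsSolution a) :
    ∀ (l : List (Fin n)) (u v : Fin n), l.getLast? = some v →
    ∀ γ : RCC5Basic, RCC5Basic.interp γ (a u) (a v) → γ ∈ Γ.pathCT u l := by
  intro l
  induction l with
  | nil => intro u v h; simp at h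
  | cons w t ih =>
    intro u v hlast γ hγ
    rcases t with _ | ⟨w', t'⟩
    · have hwv : w = v := by simpa using hlast
      subst hwv
      obtain ⟨b, hbmem, hb⟩ := ha u w
      have hγb : γ = b := basic_unique hγ hb
      simp only [RCC5Network.pathCT]
      exact hγb ▸ hbmem
    · have hlast' : (w' :: t').getLast? = some v := by
        rw [List.getLast?_cons_cons] at hlast; exact hlast
      obtain ⟨β, hβ⟩ := basic_total (a w) (a v)
      simp only [RCC5Network.pathCT]
      exact ⟨a u, a v, hγ, a w, ha u w, β, ih w v hlast' β hβ, hβ⟩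

end O5Aux

/-- In an all-different RCC5 network, the weak composition of any cycle (path of length
at least 2 from a variable to itself) contains `O₅ = {PO, PP, PP⁻¹, EQ}`. -/
theorem cycle_contains_O5 {n : ℕ} (Γ : RCC5Network n) (had : Γ.AllDifferent)
    (x : Fin n) (l : List (Fin n)) (hpath : IsPathFrom x x l) (hlen : 2 ≤ l.length) :
    ({RCC5Basic.PO, RCC5Basic.PP, RCC5Basic.PPi, RCC5Basic.EQ} : RCC5Rel) ⊆
      Γ.pathCT x l := by
    classical
  obtain ⟨hne, hlast, hchain⟩ := hpath
  rcases l with _ | ⟨u1, l'⟩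
  · simp at hlen
  rcases l' with _ | ⟨u2, l''⟩
  · simp at hlen
  have hxu1 : x ≠ u1 := (List.chain_cons.mp hchain).1
  obtain ⟨hcons, hnoEQ⟩ := had
  have hnent := hnoEQ x u1 hxu1
  rw [RCC5Network.Entails] at hnent
  push_neg at hnent
  obtain ⟨a, ha, hneq⟩ := hnent
  obtain ⟨b, hbmem, hb⟩ := ha x u1
  have hbne : b ≠ RCC5Basic.EQ := by
    rintro rfl
    exact hneq ⟨RCC5Basic.EQ, rfl, hb⟩
  have hconv := O5Aux.basic_conv hb
  have hlast' : (u2 :: l'').getLast? = some x := by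
    rw [List.getLast?_cons_cons] at hlast; exact hlast
  have htail : RCC5Basic.conv b ∈ Γ.pathCT u1 (u2 :: l'') :=
    O5Aux.mem_pathCT Γ a ha (u2 :: l'') u1 x hlast' _ hconv
  intro γ hγ
  have hγDR : γ ≠ RCC5Basic.DR := by
    simp only [Set.mem_insert_iff, Set.mem_singleton_iff] at hγ
    rcases hγ with rfl | rfl | rfl | rfl <;> decide
  obtain ⟨X, Y, Z, h1, h2, h3⟩ := O5Aux.exists_triple b hbne γ hγDR
  simp only [RCC5Network.pathCT]
  exact ⟨X, Z, h3, Y, ⟨b, hbmem, h1⟩, ⟨RCC5Basic.conv b, htail, h2⟩⟩
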